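/- For $n \geq 2$, $s \in (0,1)$ and any constant $0 < \theta < n - 2s$, there exists $C > 0$ such that for all $y \in \mathbb{R}^n$: $\int_{\mathbb{R}^n} \frac{1}{|y-z|^{n-2s}} \cdot \frac{1}{(1+|z|)^{2s+\theta}} \, dz \leq \frac{C}{(1+|y|)^{\theta}}$. -/

import Mathlib

open MeasureTheory Metric Set
open scoped ENNReal NNReal

lemma lint_sub_left {n : ℕ} (f : EuclideanSpace ℝ (Fin n) → ℝ≥0∞) (y : EuclideanSpace ℝ (Fin n)) :
    ∫⁻ z, f (y - z) = ∫⁻ z, f z := by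
  have := (lintegral_map_equiv (μ := (volume : Measure (EuclideanSpace ℝ (Fin n)))) f
    (MeasurableEquiv.subLeft y))
  rw [show (⇑(MeasurableEquiv.subLeft y) : EuclideanSpace ℝ (Fin n) → _) = fun t => y - t from rfl,
    Measure.map_sub_left_eq_self] at this
  exact this.symm

lemma annuli_sum {n : ℕ} (f : EuclideanSpace ℝ (Fin n) → ℝ≥0∞) (S : ℕ → Set (EuclideanSpace ℝ (Fin n)))
    (hn : 0 < n) (b u : ℕ → ℝ) (c w : ℝ) (hu : ∀ k, 0 ≤ u k) (hb : ∀ k, 0 ≤ b k) (hc : 0 ≤ c)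
    (hw0 : 0 ≤ w) (hw1 : w < 1)
    (hSm : ∀ k, MeasurableSet (S k)) (hS : ∀ k, S k ⊆ ball (0 : EuclideanSpace ℝ (Fin n)) (u k))
    (hf : ∀ k, ∀ z ∈ S k, f z ≤ ENNReal.ofReal (b k))
    (hbd : ∀ k, b k * u k ^ n ≤ c * w ^ k) :
    ∫⁻ z in ⋃ k, S k, f z ≤
      ENNReal.ofReal (c * (1 - w)⁻¹) * volume (ball (0 : EuclideanSpace ℝ (Fin n)) 1) := by
  haveI : Nonempty (Fin n) := ⟨⟨0, hn⟩⟩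
  have hone : (1 : ℝ≥0∞) - ENNReal.ofReal w = ENNReal.ofReal (1 - w) := by
    rw [ENNReal.ofReal_sub _ hw0, ENNReal.ofReal_one]
  calc ∫⁻ z in ⋃ k, S k, f z ≤ ∑' k, ∫⁻ z in S k, f z := lintegral_iUnion_le _ _
    _ ≤ ∑' k, ENNReal.ofReal (c * w ^ k) * volume (ball (0 : EuclideanSpace ℝ (Fin n)) 1) := by
        refine ENNReal.tsum_le_tsum fun k => ?_
        calc ∫⁻ z in S k, f z ≤ ∫⁻ _ in S k, ENNReal.ofReal (b k) :=
              setLIntegral_mono' (hSm k) (hf k)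
          _ = ENNReal.ofReal (b k) * volume (S k) := setLIntegral_const _ _
          _ ≤ ENNReal.ofReal (b k) * volume (ball (0 : EuclideanSpace ℝ (Fin n)) (u k)) := by
              exact mul_le_mul' le_rfl (measure_mono (hS k))
          _ = ENNReal.ofReal (b k) * (ENNReal.ofReal (u k ^ n) *
                volume (ball (0 : EuclideanSpace ℝ (Fin n)) 1)) := by
              rw [Measure.addHaar_ball _ _ (hu k), finrank_euclideanSpace_fin]
          _ = ENNReal.ofReal (b k * u k ^ n) * volume (ball (0 : EuclideanSpace ℝ (Fin n)) 1) := by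
              rw [ENNReal.ofReal_mul (hb k), mul_assoc]
          _ ≤ ENNReal.ofReal (c * w ^ k) * volume (ball (0 : EuclideanSpace ℝ (Fin n)) 1) := by
              exact mul_le_mul' (ENNReal.ofReal_le_ofReal (hbd k)) le_rfl
    _ = (∑' k, ENNReal.ofReal (c * w ^ k)) * volume (ball (0 : EuclideanSpace ℝ (Fin n)) 1) :=
        ENNReal.tsum_mul_right
    _ = ENNReal.ofReal (c * (1 - w)⁻¹) * volume (ball (0 : EuclideanSpace ℝ (Fin n)) 1) := by
        congr 1
        have : ∀ k : ℕ, ENNReal.ofReal (c * w ^ k) = ENNReal.ofReal c * ENNReal.ofReal w ^ k := by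
          intro k
          rw [ENNReal.ofReal_mul hc, ENNReal.ofReal_pow hw0]
        simp_rw [this]
        rw [ENNReal.tsum_mul_left, ENNReal.tsum_geometric, hone,
          ← ENNReal.ofReal_inv_of_pos (by linarith), ← ENNReal.ofReal_mul hc]

lemma two_rpow_neg_nat (m : ℕ) : (2:ℝ) ^ (-(m:ℝ)) = (1/2:ℝ) ^ m := by
  rw [Real.rpow_neg (by norm_num), Real.rpow_natCast]
  simp [one_div, inv_pow]

lemma ball_bound {n : ℕ} (hn : 0 < n) (a : ℝ) (ha : 0 < a) (han : a < n) :
    ∃ K : ℝ, 0 < K ∧ ∀ r : ℝ, 0 < r → ∀ f : EuclideanSpace ℝ (Fin n) → ℝ≥0∞,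
      (∀ z : EuclideanSpace ℝ (Fin n), z ≠ 0 → f z ≤ ENNReal.ofReal (‖z‖ ^ (-a))) →
      ∫⁻ z in ball (0 : EuclideanSpace ℝ (Fin n)) r, f z ≤
        ENNReal.ofReal (K * r ^ ((n : ℝ) - a)) := by
  haveI : Nonempty (Fin n) := ⟨⟨0, hn⟩⟩
  have h2 : (0:ℝ) < 2 := by norm_num
  set w : ℝ := (2 : ℝ) ^ (-((n : ℝ) - a)) with hw
  have hna : 0 < (n : ℝ) - a := by linarith
  have hw0 : 0 < w := Real.rpow_pos_of_pos h2 _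
  have hw1 : w < 1 := Real.rpow_lt_one_of_one_lt_of_neg (by norm_num) (by linarith)
  set V : ℝ := (volume (ball (0 : EuclideanSpace ℝ (Fin n)) 1)).toReal with hV
  have hV0 : 0 ≤ V := ENNReal.toReal_nonneg
  have hinv : 0 < (1 - w)⁻¹ := by
    apply inv_pos.2; linarith
  refine ⟨(2:ℝ) ^ a * (1 - w)⁻¹ * V + 1, by positivity, fun r hr f hf => ?_⟩
  set u : ℕ → ℝ := fun k => r * (2 : ℝ) ^ (-(k : ℝ)) with hu
  set S : ℕ → Set (EuclideanSpace ℝ (Fin n)) :=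
    fun k => ball (0 : EuclideanSpace ℝ (Fin n)) (u k) \
      ball (0 : EuclideanSpace ℝ (Fin n)) (u (k + 1)) with hS
  have hupos : ∀ k, 0 < u k := fun k => mul_pos hr (Real.rpow_pos_of_pos h2 _)
  -- coverage
  have hcover : ball (0 : EuclideanSpace ℝ (Fin n)) r ⊆ {0} ∪ ⋃ k, S k := by
    intro z hz
    rcases eq_or_ne z 0 with h0 | h0
    · exact Or.inl h0
    right
    rw [mem_ball, dist_zero_right] at hz
    have hz0 : 0 < ‖z‖ := norm_pos_iff.2 h0
    have hex : ∃ k : ℕ, u (k + 1) ≤ ‖z‖ := by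
      obtain ⟨m, hm⟩ := exists_pow_lt_of_lt_one (div_pos hz0 hr)
        (by norm_num : (1/2 : ℝ) < 1)
      refine ⟨m, ?_⟩
      have : r * (1/2:ℝ) ^ m < ‖z‖ := by
        rw [mul_comm]
        exact (lt_div_iff₀ hr).1 hm
      have hle : u (m + 1) ≤ r * (1/2:ℝ) ^ m := by
        rw [hu]
        simp only []
        rw [two_rpow_neg_nat (m+1)]
        have : (1/2:ℝ) ^ (m+1) ≤ (1/2:ℝ) ^ m := by
          apply pow_le_pow_of_le_one (by norm_num) (by norm_num)
          omega
        nlinarith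
      linarith
    set k₀ := Nat.find hex with hk₀
    have hlow : u (k₀ + 1) ≤ ‖z‖ := Nat.find_spec hex
    have hhigh : ‖z‖ < u k₀ := by
      rcases Nat.eq_zero_or_pos k₀ with h | h
      · rw [h]
        have : u 0 = r := by simp [hu]
        rw [this]; exact hz
      · obtain ⟨j, hj⟩ := Nat.exists_eq_succ_of_ne_zero h.ne'
        have := Nat.find_min hex (by omega : j < k₀)
        rw [hj]
        push_neg at this
        simpa using this
    refine mem_iUnion.2 ⟨k₀, ?_⟩
    constructor
    · rw [mem_ball, dist_zero_right]; exact hhigh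
    · rw [mem_ball, dist_zero_right]; push_neg; exact hlow
  calc ∫⁻ z in ball (0 : EuclideanSpace ℝ (Fin n)) r, f z
      ≤ ∫⁻ z in ({0} ∪ ⋃ k, S k : Set (EuclideanSpace ℝ (Fin n))), f z :=
        lintegral_mono_set hcover
    _ ≤ (∫⁻ z in ({0} : Set (EuclideanSpace ℝ (Fin n))), f z) + ∫⁻ z in ⋃ k, S k, f z :=
        lintegral_union_le _ _ _
    _ = ∫⁻ z in ⋃ k, S k, f z := by
        rw [setLIntegral_measure_zero _ _ (measure_singleton _), zero_add]
    _ ≤ ENNReal.ofReal ((r ^ ((n:ℝ) - a) * 2 ^ a) * (1 - w)⁻¹) *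
          volume (ball (0 : EuclideanSpace ℝ (Fin n)) 1) := by
        refine annuli_sum f S hn (fun k => u (k+1) ^ (-a)) u (r ^ ((n:ℝ) - a) * 2 ^ a) w
          (fun k => (hupos k).le) (fun k => Real.rpow_nonneg (hupos (k+1)).le _)
          (by positivity) hw0.le hw1
          (fun k => measurableSet_ball.diff measurableSet_ball)
          (fun k => diff_subset) ?_ ?_
        · -- hf
          intro k z hz
          obtain ⟨hz1, hz2⟩ := hz
          rw [mem_ball, dist_zero_right, not_lt] at hz2
          have hz0 : z ≠ 0 := by
            intro h
            rw [h] at hz2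
            simp at hz2
            nlinarith [hupos (k+1)]
          refine (hf z hz0).trans (ENNReal.ofReal_le_ofReal ?_)
          exact Real.rpow_le_rpow_of_nonpos (hupos (k+1)) hz2 (by linarith)
        · -- hbd
          intro k
          have key : u (k+1) ^ (-a) * u k ^ n = (r ^ ((n:ℝ) - a) * 2 ^ a) * w ^ k := by
            rw [← Real.rpow_natCast (u k) n, hu]
            simp only []
            rw [Real.mul_rpow hr.le (Real.rpow_nonneg h2.le _),
                Real.mul_rpow hr.le (Real.rpow_nonneg h2.le _),
                ← Real.rpow_natCast w k, hw,
                ← Real.rpow_mul h2.le, ← Real.rpow_mul h2.le, ← Real.rpow_mul h2.le]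
            rw [mul_mul_mul_comm, ← Real.rpow_add hr, ← Real.rpow_add h2, mul_assoc,
              ← Real.rpow_add h2]
            congr 1
            · congr 1
              push_cast
              ring
            · congr 1
              push_cast
              ring
          rw [key]
    _ ≤ ENNReal.ofReal (((2:ℝ) ^ a * (1 - w)⁻¹ * V + 1) * r ^ ((n:ℝ) - a)) := by
        rw [← ENNReal.ofReal_toReal (measure_ball_lt_top (x := (0 : EuclideanSpace ℝ (Fin n)))
        (r := 1)).ne, ← hV, ← ENNReal.ofReal_mul (by positivity)]
        apply ENNReal.ofReal_le_ofReal
        have hrp : (0:ℝ) ≤ r ^ ((n:ℝ) - a) := Real.rpow_nonneg hr.le _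
        nlinarith [Real.rpow_nonneg h2.le a, mul_nonneg (mul_nonneg (Real.rpow_nonneg h2.le a) hinv.le) hV0]

lemma tail_bound {n : ℕ} (hn : 0 < n) (b : ℝ) (hb : (n : ℝ) < b) :
    ∃ K : ℝ, 0 < K ∧ ∀ r : ℝ, 0 < r → ∀ f : EuclideanSpace ℝ (Fin n) → ℝ≥0∞,
      (∀ z : EuclideanSpace ℝ (Fin n), z ≠ 0 → f z ≤ ENNReal.ofReal (‖z‖ ^ (-b))) →
      ∫⁻ z in (ball (0 : EuclideanSpace ℝ (Fin n)) r)ᶜ, f z ≤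
        ENNReal.ofReal (K * r ^ ((n : ℝ) - b)) := by
  haveI : Nonempty (Fin n) := ⟨⟨0, hn⟩⟩
  have h2 : (0:ℝ) < 2 := by norm_num
  set w : ℝ := (2 : ℝ) ^ ((n : ℝ) - b) with hw
  have hw0 : 0 < w := Real.rpow_pos_of_pos h2 _
  have hw1 : w < 1 := Real.rpow_lt_one_of_one_lt_of_neg (by norm_num) (by linarith)
  set V : ℝ := (volume (ball (0 : EuclideanSpace ℝ (Fin n)) 1)).toReal with hV
  have hV0 : 0 ≤ V := ENNReal.toReal_nonneg
  have hinv : 0 < (1 - w)⁻¹ := by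
    apply inv_pos.2; linarith
  refine ⟨(2:ℝ) ^ ((n:ℝ)) * (1 - w)⁻¹ * V + 1, by positivity, fun r hr f hf => ?_⟩
  set v : ℕ → ℝ := fun k => r * (2 : ℝ) ^ ((k : ℝ)) with hv
  set S : ℕ → Set (EuclideanSpace ℝ (Fin n)) :=
    fun k => ball (0 : EuclideanSpace ℝ (Fin n)) (v (k + 1)) \
      ball (0 : EuclideanSpace ℝ (Fin n)) (v k) with hS
  have hvpos : ∀ k, 0 < v k := fun k => mul_pos hr (Real.rpow_pos_of_pos h2 _)
  have hvnat : ∀ k : ℕ, v k = r * (2:ℝ) ^ k := by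
    intro k
    simp only [hv]
    rw [Real.rpow_natCast]
  have hcover : (ball (0 : EuclideanSpace ℝ (Fin n)) r)ᶜ ⊆ ⋃ k, S k := by
    intro z hz
    rw [mem_compl_iff, mem_ball, dist_zero_right, not_lt] at hz
    have hex : ∃ k : ℕ, ‖z‖ < v (k + 1) := by
      obtain ⟨m, hm⟩ := pow_unbounded_of_one_lt (‖z‖ / r) (by norm_num : (1:ℝ) < 2)
      refine ⟨m, ?_⟩
      have h1 : ‖z‖ < r * 2 ^ m := by
        rw [div_lt_iff₀ hr] at hm
        nlinarith
      rw [hvnat]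
      have h3 : (2:ℝ) ^ m ≤ 2 ^ (m+1) := by
        apply pow_le_pow_right₀ (by norm_num)
        omega
      nlinarith
    set k₀ := Nat.find hex with hk₀
    have hhigh : ‖z‖ < v (k₀ + 1) := Nat.find_spec hex
    have hlow : v k₀ ≤ ‖z‖ := by
      rcases Nat.eq_zero_or_pos k₀ with h | h
      · rw [h]
        have : v 0 = r := by rw [hvnat]; simp
        rw [this]; exact hz
      · obtain ⟨j, hj⟩ := Nat.exists_eq_succ_of_ne_zero h.ne'
        have := Nat.find_min hex (by omega : j < k₀)
        rw [hj]
        push_neg at this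
        exact this
    refine mem_iUnion.2 ⟨k₀, ?_, ?_⟩
    · rw [mem_ball, dist_zero_right]; exact hhigh
    · rw [mem_ball, dist_zero_right]; push_neg; exact hlow
  calc ∫⁻ z in (ball (0 : EuclideanSpace ℝ (Fin n)) r)ᶜ, f z
      ≤ ∫⁻ z in ⋃ k, S k, f z := lintegral_mono_set hcover
    _ ≤ ENNReal.ofReal ((r ^ ((n:ℝ) - b) * 2 ^ ((n:ℝ))) * (1 - w)⁻¹) *
          volume (ball (0 : EuclideanSpace ℝ (Fin n)) 1) := by
        refine annuli_sum f S hn (fun k => v k ^ (-b)) (fun k => v (k+1))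
          (r ^ ((n:ℝ) - b) * 2 ^ ((n:ℝ))) w
          (fun k => (hvpos (k+1)).le) (fun k => Real.rpow_nonneg (hvpos k).le _)
          (by positivity) hw0.le hw1
          (fun k => measurableSet_ball.diff measurableSet_ball)
          (fun k => diff_subset) ?_ ?_
        · intro k z hz
          obtain ⟨hz1, hz2⟩ := hz
          rw [mem_ball, dist_zero_right, not_lt] at hz2
          have hz0 : z ≠ 0 := by
            intro h
            rw [h] at hz2
            simp at hz2
            nlinarith [hvpos k]
          refine (hf z hz0).trans (ENNReal.ofReal_le_ofReal ?_)
          exact Real.rpow_le_rpow_of_nonpos (hvpos k) hz2 (by linarith)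
        · intro k
          have key : v k ^ (-b) * v (k+1) ^ n = (r ^ ((n:ℝ) - b) * 2 ^ ((n:ℝ))) * w ^ k := by
            rw [← Real.rpow_natCast (v (k+1)) n, hv]
            simp only []
            rw [Real.mul_rpow hr.le (Real.rpow_nonneg h2.le _),
                Real.mul_rpow hr.le (Real.rpow_nonneg h2.le _),
                ← Real.rpow_natCast w k, hw,
                ← Real.rpow_mul h2.le, ← Real.rpow_mul h2.le, ← Real.rpow_mul h2.le]
            rw [mul_mul_mul_comm, ← Real.rpow_add hr, ← Real.rpow_add h2, mul_assoc,
              ← Real.rpow_add h2]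
            congr 1
            · congr 1
              ring
            · congr 1
              push_cast
              ring
          rw [key]
    _ ≤ ENNReal.ofReal (((2:ℝ) ^ ((n:ℝ)) * (1 - w)⁻¹ * V + 1) * r ^ ((n:ℝ) - b)) := by
        rw [← ENNReal.ofReal_toReal (measure_ball_lt_top (x := (0 : EuclideanSpace ℝ (Fin n)))
          (r := 1)).ne, ← hV, ← ENNReal.ofReal_mul (by positivity)]
        apply ENNReal.ofReal_le_ofReal
        have hrp : (0:ℝ) ≤ r ^ ((n:ℝ) - b) := Real.rpow_nonneg hr.le _
        nlinarith [Real.rpow_nonneg h2.le ((n:ℝ)),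
          mul_nonneg (mul_nonneg (Real.rpow_nonneg h2.le ((n:ℝ))) hinv.le) hV0]

theorem stmt_8 (n : ℕ) (hn : 2 ≤ n) (s θ : ℝ) (hs : s ∈ Set.Ioo (0:ℝ) 1)
    (hθ0 : 0 < θ) (hθn : θ < (n : ℝ) - 2 * s) :
    ∃ C > 0, ∀ y : EuclideanSpace ℝ (Fin n),
      (∫ z : EuclideanSpace ℝ (Fin n),
          1 / ‖y - z‖ ^ ((n : ℝ) - 2 * s) * (1 / (1 + ‖z‖) ^ (2 * s + θ))) ≤
        C / (1 + ‖y‖) ^ θ := by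
  obtain ⟨hs0, hs1⟩ := hs
  have hn0 : 0 < n := by omega
  have hn2 : (2:ℝ) ≤ (n:ℝ) := by exact_mod_cast hn
  set ν : ℝ := (n:ℝ) - 2*s with hνdef
  have hν0 : 0 < ν := by simp only [hνdef]; linarith
  have hνn : ν < (n:ℝ) := by simp only [hνdef]; linarith
  have hb0 : 0 < 2*s+θ := by linarith
  have hbn : 2*s+θ < (n:ℝ) := by simp only [hνdef] at hθn; linarith
  obtain ⟨K₁, hK₁, HK₁⟩ := ball_bound hn0 ν hν0 hνn
  obtain ⟨K₂, hK₂, HK₂⟩ := ball_bound hn0 (2*s+θ) hb0 hbn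
  obtain ⟨K₃, hK₃, HK₃⟩ := tail_bound hn0 ((n:ℝ)+θ) (by linarith)
  have h20 : (0:ℝ) < 2 := by norm_num
  set c₁ : ℝ := K₁ * 2 ^ θ with hc₁
  set c₂ : ℝ := K₂ * 2 ^ ν * 2 ^ ((n:ℝ)-(2*s+θ)) with hc₂
  set c₃ : ℝ := 2 ^ ν * K₃ * 2 ^ (-θ) with hc₃
  have hc₁0 : 0 < c₁ := by positivity
  have hc₂0 : 0 < c₂ := by positivity
  have hc₃0 : 0 < c₃ := by positivity
  refine ⟨c₁ + c₂ + c₃, by positivity, fun y => ?_⟩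
  set R : ℝ := 1 + ‖y‖ with hRdef
  have hR1 : 1 ≤ R := by simp only [hRdef]; linarith [norm_nonneg y]
  have hR0 : 0 < R := by linarith
  have hR2 : 0 < R/2 := by linarith
  have h2R : 0 < 2*R := by linarith
  set F : EuclideanSpace ℝ (Fin n) → ℝ :=
    fun z => 1 / ‖y - z‖ ^ ((n : ℝ) - 2 * s) * (1 / (1 + ‖z‖) ^ (2 * s + θ)) with hF
  have hFR : ∀ z, F z = ‖y - z‖ ^ (-ν) * (1 + ‖z‖) ^ (-(2*s+θ)) := by
    intro z
    simp only [hF, hνdef]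
    rw [Real.rpow_neg (norm_nonneg _), Real.rpow_neg (by positivity), one_div, one_div]
  have hFnn : ∀ z, 0 ≤ F z := by
    intro z
    simp only [hF]
    positivity
  have hFm : Measurable F := by
    simp only [hF]
    fun_prop
  -- Region A
  have hA : ∫⁻ z in ball y (R/2), ENNReal.ofReal (F z) ≤ ENNReal.ofReal (c₁ * R ^ (-θ)) := by
    calc ∫⁻ z in ball y (R/2), ENNReal.ofReal (F z)
        ≤ ∫⁻ z in ball y (R/2),
            ENNReal.ofReal ((R/2) ^ (-(2*s+θ))) * ENNReal.ofReal (‖y - z‖ ^ (-ν)) := by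
          refine setLIntegral_mono' measurableSet_ball fun z hz => ?_
          rw [← ENNReal.ofReal_mul (Real.rpow_nonneg hR2.le _), hFR z]
          apply ENNReal.ofReal_le_ofReal
          have hzR : R/2 ≤ 1 + ‖z‖ := by
            rw [mem_ball] at hz
            have h1 : ‖y‖ - ‖z‖ ≤ ‖y - z‖ := norm_sub_norm_le _ _
            have h2 : ‖y - z‖ = dist z y := by rw [dist_eq_norm, norm_sub_rev]
            simp only [hRdef] at *
            linarith
          have := Real.rpow_le_rpow_of_nonpos hR2 hzR (by linarith : -(2*s+θ) ≤ 0)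
          calc ‖y - z‖ ^ (-ν) * (1 + ‖z‖) ^ (-(2*s+θ))
              ≤ ‖y - z‖ ^ (-ν) * (R/2) ^ (-(2*s+θ)) := by
                apply mul_le_mul_of_nonneg_left this (Real.rpow_nonneg (norm_nonneg _) _)
            _ = (R/2) ^ (-(2*s+θ)) * ‖y - z‖ ^ (-ν) := mul_comm _ _
      _ = ENNReal.ofReal ((R/2) ^ (-(2*s+θ))) *
            ∫⁻ z in ball y (R/2), ENNReal.ofReal (‖y - z‖ ^ (-ν)) := by
          rw [lintegral_const_mul' _ _ ENNReal.ofReal_ne_top]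
      _ ≤ ENNReal.ofReal ((R/2) ^ (-(2*s+θ))) * ENNReal.ofReal (K₁ * (R/2) ^ ((n:ℝ) - ν)) := by
          apply mul_le_mul' le_rfl
          have hswap : ∫⁻ z in ball y (R/2), ENNReal.ofReal (‖y - z‖ ^ (-ν)) =
              ∫⁻ z in ball (0 : EuclideanSpace ℝ (Fin n)) (R/2), ENNReal.ofReal (‖z‖ ^ (-ν)) := by
            rw [← lintegral_indicator measurableSet_ball,
              ← lintegral_indicator measurableSet_ball]
            have hpt : ∀ z, (ball y (R/2)).indicator
                (fun z => ENNReal.ofReal (‖y - z‖ ^ (-ν))) z =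
                (ball (0 : EuclideanSpace ℝ (Fin n)) (R/2)).indicator
                (fun w => ENNReal.ofReal (‖w‖ ^ (-ν))) (y - z) := by
              intro z
              have hmem : z ∈ ball y (R/2) ↔
                  y - z ∈ ball (0 : EuclideanSpace ℝ (Fin n)) (R/2) := by
                rw [mem_ball, mem_ball, dist_zero_right, dist_eq_norm, norm_sub_rev]
              by_cases h : z ∈ ball y (R/2)
              · rw [Set.indicator_of_mem h, Set.indicator_of_mem (hmem.1 h)]
              · rw [Set.indicator_of_notMem h, Set.indicator_of_notMem (fun hc => h (hmem.2 hc))]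
            simp_rw [hpt]
            exact lint_sub_left _ y
          rw [hswap]
          exact HK₁ (R/2) hR2 _ (fun z _ => le_rfl)
      _ ≤ ENNReal.ofReal (c₁ * R ^ (-θ)) := by
          rw [← ENNReal.ofReal_mul (Real.rpow_nonneg hR2.le _)]
          apply ENNReal.ofReal_le_ofReal
          have e1 : (R/2) ^ (-(2*s+θ)) * (R/2) ^ ((n:ℝ) - ν) = (R/2) ^ (-θ) := by
            rw [← Real.rpow_add hR2]
            congr 1
            simp only [hνdef]
            ring
          have e2 : (R/2) ^ (-θ) = 2 ^ θ * R ^ (-θ) := by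
            rw [Real.div_rpow hR0.le h20.le, Real.rpow_neg h20.le, div_eq_mul_inv, inv_inv,
              mul_comm]
          calc (R/2) ^ (-(2*s+θ)) * (K₁ * (R/2) ^ ((n:ℝ) - ν))
              = K₁ * ((R/2) ^ (-(2*s+θ)) * (R/2) ^ ((n:ℝ) - ν)) := by ring
            _ = K₁ * (2 ^ θ * R ^ (-θ)) := by rw [e1, e2]
            _ = c₁ * R ^ (-θ) := by rw [hc₁]; ring
            _ ≤ c₁ * R ^ (-θ) := le_rfl
  -- Region B
  have hB : ∫⁻ z in ball (0 : EuclideanSpace ℝ (Fin n)) (2*R) \ ball y (R/2),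
      ENNReal.ofReal (F z) ≤ ENNReal.ofReal (c₂ * R ^ (-θ)) := by
    calc ∫⁻ z in ball (0 : EuclideanSpace ℝ (Fin n)) (2*R) \ ball y (R/2), ENNReal.ofReal (F z)
        ≤ ∫⁻ z in ball (0 : EuclideanSpace ℝ (Fin n)) (2*R) \ ball y (R/2),
            ENNReal.ofReal ((R/2) ^ (-ν)) * ENNReal.ofReal ((1+‖z‖) ^ (-(2*s+θ))) := by
          refine setLIntegral_mono' (measurableSet_ball.diff measurableSet_ball) fun z hz => ?_
          rw [← ENNReal.ofReal_mul (Real.rpow_nonneg hR2.le _), hFR z]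
          apply ENNReal.ofReal_le_ofReal
          have hz2 : R/2 ≤ ‖y - z‖ := by
            obtain ⟨-, hz2⟩ := hz
            rw [mem_ball, not_lt] at hz2
            rw [show ‖y - z‖ = dist z y from by rw [dist_eq_norm, norm_sub_rev]]
            exact hz2
          have h1 : ‖y - z‖ ^ (-ν) ≤ (R/2) ^ (-ν) :=
            Real.rpow_le_rpow_of_nonpos hR2 hz2 (by linarith)
          exact mul_le_mul_of_nonneg_right h1 (Real.rpow_nonneg (by positivity) _)
      _ = ENNReal.ofReal ((R/2) ^ (-ν)) *
            ∫⁻ z in ball (0 : EuclideanSpace ℝ (Fin n)) (2*R) \ ball y (R/2),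
              ENNReal.ofReal ((1+‖z‖) ^ (-(2*s+θ))) :=
          lintegral_const_mul' _ _ ENNReal.ofReal_ne_top
      _ ≤ ENNReal.ofReal ((R/2) ^ (-ν)) * ENNReal.ofReal (K₂ * (2*R) ^ ((n:ℝ) - (2*s+θ))) := by
          apply mul_le_mul' le_rfl
          refine le_trans (lintegral_mono_set diff_subset) ?_
          refine HK₂ (2*R) h2R _ (fun z hz0 => ?_)
          apply ENNReal.ofReal_le_ofReal
          exact Real.rpow_le_rpow_of_nonpos (norm_pos_iff.2 hz0)
            (by linarith [norm_nonneg z]) (by linarith)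
      _ ≤ ENNReal.ofReal (c₂ * R ^ (-θ)) := by
          rw [← ENNReal.ofReal_mul (Real.rpow_nonneg hR2.le _)]
          apply ENNReal.ofReal_le_ofReal
          have e1 : (R/2) ^ (-ν) = 2 ^ ν * R ^ (-ν) := by
            rw [Real.div_rpow hR0.le h20.le, Real.rpow_neg h20.le, div_eq_mul_inv, inv_inv,
              mul_comm]
          have e2 : (2*R) ^ ((n:ℝ)-(2*s+θ)) = 2 ^ ((n:ℝ)-(2*s+θ)) * R ^ ((n:ℝ)-(2*s+θ)) :=
            Real.mul_rpow h20.le hR0.le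
          have e3 : R ^ (-ν) * R ^ ((n:ℝ)-(2*s+θ)) = R ^ (-θ) := by
            rw [← Real.rpow_add hR0]; congr 1; simp only [hνdef]; ring
          calc (R/2) ^ (-ν) * (K₂ * (2*R) ^ ((n:ℝ)-(2*s+θ)))
              = K₂ * 2 ^ ν * 2 ^ ((n:ℝ)-(2*s+θ)) * (R ^ (-ν) * R ^ ((n:ℝ)-(2*s+θ))) := by
                rw [e1, e2]; ring
            _ = c₂ * R ^ (-θ) := by rw [e3, hc₂]
            _ ≤ c₂ * R ^ (-θ) := le_rfl
  -- Region T
  have hT : ∫⁻ z in (ball (0 : EuclideanSpace ℝ (Fin n)) (2*R))ᶜ,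
      ENNReal.ofReal (F z) ≤ ENNReal.ofReal (c₃ * R ^ (-θ)) := by
    calc ∫⁻ z in (ball (0 : EuclideanSpace ℝ (Fin n)) (2*R))ᶜ, ENNReal.ofReal (F z)
        ≤ ∫⁻ z in (ball (0 : EuclideanSpace ℝ (Fin n)) (2*R))ᶜ,
            ENNReal.ofReal ((2:ℝ) ^ ν) * ENNReal.ofReal (‖z‖ ^ (-((n:ℝ)+θ))) := by
          refine setLIntegral_mono' measurableSet_ball.compl fun z hz => ?_
          rw [← ENNReal.ofReal_mul (Real.rpow_nonneg h20.le _), hFR z]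
          apply ENNReal.ofReal_le_ofReal
          have hz2 : 2*R ≤ ‖z‖ := by
            rw [mem_compl_iff, mem_ball, dist_zero_right, not_lt] at hz
            exact hz
          have hz0 : 0 < ‖z‖ := by linarith
          have hyz : ‖z‖/2 ≤ ‖y - z‖ := by
            have h1 : ‖z‖ - ‖y‖ ≤ ‖y - z‖ := by
              have h := norm_sub_norm_le z y
              rw [norm_sub_rev] at h
              exact h
            have h2 : ‖y‖ = R - 1 := by simp only [hRdef]; ring
            linarith
          have h1 : ‖y - z‖ ^ (-ν) ≤ (‖z‖/2) ^ (-ν) :=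
            Real.rpow_le_rpow_of_nonpos (by linarith) hyz (by linarith)
          have h2 : (1+‖z‖) ^ (-(2*s+θ)) ≤ ‖z‖ ^ (-(2*s+θ)) :=
            Real.rpow_le_rpow_of_nonpos hz0 (by linarith) (by linarith)
          have e1 : (‖z‖/2) ^ (-ν) = 2 ^ ν * ‖z‖ ^ (-ν) := by
            rw [Real.div_rpow (norm_nonneg z) h20.le, Real.rpow_neg h20.le, div_eq_mul_inv,
              inv_inv, mul_comm]
          have e2 : ‖z‖ ^ (-ν) * ‖z‖ ^ (-(2*s+θ)) = ‖z‖ ^ (-((n:ℝ)+θ)) := by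
            rw [← Real.rpow_add hz0]; congr 1; simp only [hνdef]; ring
          calc ‖y - z‖ ^ (-ν) * (1+‖z‖) ^ (-(2*s+θ))
              ≤ (‖z‖/2) ^ (-ν) * ‖z‖ ^ (-(2*s+θ)) :=
                mul_le_mul h1 h2 (Real.rpow_nonneg (by positivity) _)
                  (Real.rpow_nonneg (by positivity) _)
            _ = 2 ^ ν * (‖z‖ ^ (-ν) * ‖z‖ ^ (-(2*s+θ))) := by rw [e1]; ring
            _ = 2 ^ ν * ‖z‖ ^ (-((n:ℝ)+θ)) := by rw [e2]
      _ = ENNReal.ofReal ((2:ℝ) ^ ν) * ∫⁻ z in (ball (0 : EuclideanSpace ℝ (Fin n)) (2*R))ᶜ,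
            ENNReal.ofReal (‖z‖ ^ (-((n:ℝ)+θ))) :=
          lintegral_const_mul' _ _ ENNReal.ofReal_ne_top
      _ ≤ ENNReal.ofReal ((2:ℝ) ^ ν) * ENNReal.ofReal (K₃ * (2*R) ^ ((n:ℝ) - ((n:ℝ)+θ))) :=
          mul_le_mul' le_rfl (HK₃ (2*R) h2R _ (fun z _ => le_rfl))
      _ ≤ ENNReal.ofReal (c₃ * R ^ (-θ)) := by
          rw [← ENNReal.ofReal_mul (Real.rpow_nonneg h20.le _)]
          apply ENNReal.ofReal_le_ofReal
          have e0 : ((n:ℝ) - ((n:ℝ)+θ)) = -θ := by ring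
          have e2 : (2*R) ^ (-θ) = 2 ^ (-θ) * R ^ (-θ) := Real.mul_rpow h20.le hR0.le
          calc (2:ℝ) ^ ν * (K₃ * (2*R) ^ ((n:ℝ) - ((n:ℝ)+θ)))
              = 2 ^ ν * (K₃ * ((2*R) ^ (-θ))) := by rw [e0]
            _ = c₃ * R ^ (-θ) := by rw [e2, hc₃]; ring
            _ ≤ c₃ * R ^ (-θ) := le_rfl
  -- assemble
  have hcover : (Set.univ : Set (EuclideanSpace ℝ (Fin n))) ⊆
      ball y (R/2) ∪ (ball (0 : EuclideanSpace ℝ (Fin n)) (2*R) \ ball y (R/2)) ∪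
      (ball (0 : EuclideanSpace ℝ (Fin n)) (2*R))ᶜ := by
    intro z _
    by_cases h1 : z ∈ ball y (R/2)
    · exact Or.inl (Or.inl h1)
    by_cases h2 : z ∈ ball (0 : EuclideanSpace ℝ (Fin n)) (2*R)
    · exact Or.inl (Or.inr ⟨h2, h1⟩)
    · exact Or.inr h2
  have key : ∫⁻ z, ENNReal.ofReal (F z) ≤ ENNReal.ofReal ((c₁+c₂+c₃) * R ^ (-θ)) := by
    calc ∫⁻ z, ENNReal.ofReal (F z)
        = ∫⁻ z in (Set.univ : Set (EuclideanSpace ℝ (Fin n))), ENNReal.ofReal (F z) :=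
          (setLIntegral_univ _).symm
      _ ≤ ∫⁻ z in ball y (R/2) ∪ (ball (0 : EuclideanSpace ℝ (Fin n)) (2*R) \ ball y (R/2)) ∪
            (ball (0 : EuclideanSpace ℝ (Fin n)) (2*R))ᶜ, ENNReal.ofReal (F z) :=
          lintegral_mono_set hcover
      _ ≤ (∫⁻ z in ball y (R/2), ENNReal.ofReal (F z)) +
            (∫⁻ z in ball (0 : EuclideanSpace ℝ (Fin n)) (2*R) \ ball y (R/2),
              ENNReal.ofReal (F z)) +
            ∫⁻ z in (ball (0 : EuclideanSpace ℝ (Fin n)) (2*R))ᶜ, ENNReal.ofReal (F z) :=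
          le_trans (lintegral_union_le _ _ _) (add_le_add (lintegral_union_le _ _ _) le_rfl)
      _ ≤ ENNReal.ofReal (c₁ * R ^ (-θ)) + ENNReal.ofReal (c₂ * R ^ (-θ)) +
            ENNReal.ofReal (c₃ * R ^ (-θ)) := add_le_add (add_le_add hA hB) hT
      _ = ENNReal.ofReal ((c₁+c₂+c₃) * R ^ (-θ)) := by
          rw [← ENNReal.ofReal_add (mul_nonneg hc₁0.le (Real.rpow_nonneg hR0.le _))
              (mul_nonneg hc₂0.le (Real.rpow_nonneg hR0.le _)),
            ← ENNReal.ofReal_add (by positivity) (mul_nonneg hc₃0.le (Real.rpow_nonneg hR0.le _))]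
          congr 1
          ring
  rw [integral_eq_lintegral_of_nonneg_ae (Filter.Eventually.of_forall hFnn)
    hFm.aestronglyMeasurable]
  have hfin := ENNReal.toReal_le_of_le_ofReal
    (mul_nonneg (by positivity) (Real.rpow_nonneg hR0.le _)) key
  calc (∫⁻ z, ENNReal.ofReal (F z)).toReal ≤ (c₁+c₂+c₃) * R ^ (-θ) := hfin
    _ = (c₁+c₂+c₃) / R ^ θ := by rw [Real.rpow_neg hR0.le, div_eq_mul_inv]
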